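/- Let p_1,…,p_n : ℝ^k → ℝ be continuously differentiable and L-positively homogeneous (L > 0), let ℓ be the exponential or logistic loss, 𝓛(W) = Σ_i ℓ(p_i(W)), and let W : [0,∞) → ℝ^k be a C¹ gradient flow with dW_t/dt = −∇𝓛(W_t) and 𝓛(W_0) < ℓ(0). Then ‖W_t‖ ≥ ‖W_0‖ > 0 for all t, and with W̃_t = W_t/‖W_t‖, α̃(W) = α(W)/‖W‖^L, and radial/spherical decompositions ∇_r f(W) = ⟨∇f(W), W̃⟩W̃ and ∇_⊥ f(W) = ∇f(W) − ∇_r f(W), it holds for all t that: (i) d(W̃_t)/dt = −∇_⊥𝓛(W_t)/‖W_t‖, hence ‖d(W̃_t)/dt‖ = ‖∇_⊥𝓛(W_t)‖/‖W_t‖; and (ii) d(α̃(W_t))/dt = ‖∇_r α̃(W_t)‖·‖∇_r 𝓛(W_t)‖ + ‖∇_⊥ α̃(W_t)‖·‖∇_⊥ 𝓛(W_t)‖. -/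

import Mathlib

/-!
Along the flow, `d‖W‖²/dt = -2⟪∇𝓛, W⟫ = -2L ∑ᵢ ℓ'(pᵢ) pᵢ` by Euler's identity for homogeneous
functions. Every margin `pᵢ(W)` is at least the smoothed margin `α = ℓ⁻¹(𝓛(W)) > 0`, and
`z ℓ'(z) / ℓ(z)` is nonincreasing on `(0, ∞)` for both losses, so `∑ᵢ pᵢ ℓ'(pᵢ) ≤ α ℓ'(α) < 0`
and the norm grows. Differentiating `W / ‖W‖` keeps only the spherical part of the velocity.
For (ii), `∇α̃ = ‖W‖^{-L} (ℓ'(α)⁻¹ ∇𝓛 - (L α / ‖W‖²) W)`: its spherical part is a nonpositive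
multiple of `∇_⊥𝓛`, and the same bound `⟪∇𝓛, W⟫ ≤ L α ℓ'(α)` makes its radial part point outwards
while `∇_r𝓛` points inwards, so `-⟪∇α̃, ∇𝓛⟫` splits into the two products of norms.
-/

open scoped RealInnerProductSpace

open Set Function Real InnerProductSpace Filter

structure IsMarginLoss (ℓ : ℝ → ℝ) : Prop where
  range_eq : range ℓ = Ioi 0
  deriv_neg : ∀ z, deriv ℓ z < 0
  antitoneOn_mul_deriv_div : AntitoneOn (fun z => z * deriv ℓ z / ℓ z) (Ioi 0)

namespace IsMarginLoss

variable {ℓ : ℝ → ℝ}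

theorem pos (hℓ : IsMarginLoss ℓ) (z : ℝ) : 0 < ℓ z :=
  show ℓ z ∈ Ioi 0 from hℓ.range_eq ▸ mem_range_self z

theorem hasDerivAt (hℓ : IsMarginLoss ℓ) (z : ℝ) : HasDerivAt ℓ (deriv ℓ z) z :=
  (differentiableAt_of_deriv_ne_zero (hℓ.deriv_neg z).ne).hasDerivAt

theorem differentiable (hℓ : IsMarginLoss ℓ) : Differentiable ℝ ℓ :=
  fun z => (hℓ.hasDerivAt z).differentiableAt

theorem strictAnti (hℓ : IsMarginLoss ℓ) : StrictAnti ℓ := strictAnti_of_deriv_neg hℓ.deriv_neg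

theorem apply_invFun (hℓ : IsMarginLoss ℓ) {y : ℝ} (hy : 0 < y) : ℓ (invFun ℓ y) = y :=
  invFun_eq (hℓ.range_eq.symm ▸ hy : y ∈ range ℓ)

theorem invFun_apply (hℓ : IsMarginLoss ℓ) (z : ℝ) : invFun ℓ (ℓ z) = z :=
  leftInverse_invFun hℓ.strictAnti.injective z

theorem continuousAt_invFun (hℓ : IsMarginLoss ℓ) {y : ℝ} (hy : 0 < y) :
    ContinuousAt (invFun ℓ) y := by
  have hmono : MonotoneOn (fun y => -invFun ℓ y) (Ioi 0) := fun y₁ hy₁ y₂ hy₂ h =>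
    neg_le_neg <| hℓ.strictAnti.le_iff_ge.mp <| by
      rwa [hℓ.apply_invFun hy₁, hℓ.apply_invFun hy₂]
  have himage : (fun y => -invFun ℓ y) '' Ioi 0 = univ :=
    eq_univ_of_forall fun w => ⟨ℓ (-w), hℓ.pos _, by simp [hℓ.invFun_apply]⟩
  have := (continuousAt_of_monotoneOn_of_image_mem_nhds hmono (Ioi_mem_nhds hy)
    (himage ▸ univ_mem)).neg
  simpa only [Pi.neg_def, neg_neg] using this

theorem hasDerivAt_invFun (hℓ : IsMarginLoss ℓ) {y : ℝ} (hy : 0 < y) :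
    HasDerivAt (invFun ℓ) (deriv ℓ (invFun ℓ y))⁻¹ y :=
  (hℓ.hasDerivAt _).of_local_left_inverse (hℓ.continuousAt_invFun hy) (hℓ.deriv_neg _).ne
    (eventually_gt_nhds hy |>.mono fun _ => hℓ.apply_invFun)

theorem invFun_pos (hℓ : IsMarginLoss ℓ) {y : ℝ} (hy : 0 < y) (hy₀ : y < ℓ 0) : 0 < invFun ℓ y :=
  hℓ.strictAnti.lt_iff_gt.mp (by rwa [hℓ.apply_invFun hy])

theorem sum_mul_deriv_le (hℓ : IsMarginLoss ℓ) {ι : Type*} {s : Finset ι} {z : ι → ℝ} {a : ℝ}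
    (ha : 0 < a) (hsum : ∑ i ∈ s, ℓ (z i) = ℓ a) : ∑ i ∈ s, z i * deriv ℓ (z i) ≤ a * deriv ℓ a := by
  have hle : ∀ i ∈ s, a ≤ z i := fun i hi => hℓ.strictAnti.le_iff_ge.mp <|
    hsum ▸ Finset.single_le_sum (fun j _ => (hℓ.pos (z j)).le) hi
  calc ∑ i ∈ s, z i * deriv ℓ (z i)
      = ∑ i ∈ s, z i * deriv ℓ (z i) / ℓ (z i) * ℓ (z i) :=
        Finset.sum_congr rfl fun i _ => (div_mul_cancel₀ _ (hℓ.pos _).ne').symm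
    _ ≤ ∑ i ∈ s, a * deriv ℓ a / ℓ a * ℓ (z i) := Finset.sum_le_sum fun i hi =>
        mul_le_mul_of_nonneg_right
          (hℓ.antitoneOn_mul_deriv_div (mem_Ioi.mpr ha) (mem_Ioi.mpr (ha.trans_le (hle i hi)))
            (hle i hi)) (hℓ.pos _).le
    _ = a * deriv ℓ a := by rw [← Finset.mul_sum, hsum, div_mul_cancel₀ _ (hℓ.pos _).ne']

end IsMarginLoss

theorem isMarginLoss_exp : IsMarginLoss fun z => exp (-z) := by
  have hderiv (z : ℝ) : deriv (fun z => exp (-z)) z = -exp (-z) := by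
    simpa using ((hasDerivAt_neg z).exp).deriv
  refine ⟨?_, fun z => by simp [hderiv, exp_pos], ?_⟩
  · refine subset_antisymm (range_subset_iff.mpr fun z => exp_pos _) fun y hy => ⟨-log y, ?_⟩
    simp [exp_log (mem_Ioi.mp hy)]
  · intro a _ z _ h
    simp only [hderiv, mul_neg, neg_div, mul_div_cancel_right₀ _ (exp_pos _).ne', neg_le_neg_iff]
    exact h

theorem hasDerivAt_logistic (z : ℝ) :
    HasDerivAt (fun z => log (1 + exp (-z))) (-exp (-z) / (1 + exp (-z))) z := by
  simpa using ((hasDerivAt_neg z).exp.const_add 1).log (by positivity)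

theorem isMarginLoss_logistic : IsMarginLoss fun z => log (1 + exp (-z)) := by
  have hderiv (z : ℝ) : deriv (fun z => log (1 + exp (-z))) z = -exp (-z) / (1 + exp (-z)) :=
    (hasDerivAt_logistic z).deriv
  have hlog_pos (z : ℝ) : 0 < log (1 + exp (-z)) := log_pos (by linarith [exp_pos (-z)])
  refine ⟨?_, fun z => ?_, ?_⟩
  · refine subset_antisymm (range_subset_iff.mpr hlog_pos) fun y hy => ⟨-log (exp y - 1), ?_⟩
    have : 0 < exp y - 1 := by linarith [add_one_lt_exp (mem_Ioi.mp hy).ne', mem_Ioi.mp hy]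
    simp [exp_log this]
  · rw [hderiv]
    exact div_neg_of_neg_of_pos (by simp [exp_pos]) (by positivity)
  · -- `z ℓ'(z) / ℓ(z) = -z / σ(1 + e^{-z})` with `σ(t) = t log t / (t - 1)` the slope of the
    -- convex function `t log t` between `1` and `t`, which decreases as `z` grows.
    set σ : ℝ → ℝ := fun t => (t * log t - 1 * log 1) / (t - 1)
    have hσ (z : ℝ) : z * deriv (fun z => log (1 + exp (-z))) z / log (1 + exp (-z))
        = -(z / σ (1 + exp (-z))) := by
      have := exp_pos (-z)
      have := hlog_pos z
      simp only [σ, hderiv, log_one, mul_zero, sub_zero, add_sub_cancel_left]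
      field_simp
    have hσ_pos (z : ℝ) : 0 < σ (1 + exp (-z)) := by
      have := exp_pos (-z)
      have := hlog_pos z
      simp only [σ, log_one, mul_zero, sub_zero, add_sub_cancel_left]
      positivity
    intro a ha z hz haz
    simp only [hσ, neg_le_neg_iff]
    refine div_le_div₀ (le_of_lt hz) haz (hσ_pos z) ?_
    have hmem (z : ℝ) : 1 + exp (-z) ∈ Ici (0 : ℝ) := mem_Ici.mpr (by positivity)
    have hne (z : ℝ) : 1 + exp (-z) ≠ 1 := by simp [(exp_pos _).ne']
    exact convexOn_mul_log.secant_mono (mem_Ici.mpr zero_le_one) (hmem z) (hmem a) (hne z) (hne a)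
      (by gcongr)

section Homogeneous

variable {E : Type*} [NormedAddCommGroup E] [NormedSpace ℝ E]

def IsPosHomogeneous (L : ℝ) (f : E → ℝ) : Prop :=
  ∀ c : ℝ, 0 < c → ∀ x, f (c • x) = c ^ L * f x

theorem IsPosHomogeneous.map_zero {L : ℝ} {f : E → ℝ} (hf : IsPosHomogeneous L f) (hL : 0 < L) :
    f 0 = 0 := by
  have h := hf 2 two_pos 0
  rw [smul_zero] at h
  have h2 : (1 : ℝ) < 2 ^ L := one_lt_rpow one_lt_two hL
  nlinarith

theorem IsPosHomogeneous.hasFDerivAt_apply_self {L : ℝ} {f : E → ℝ} {f' : E →L[ℝ] ℝ} {x : E}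
    (hf : IsPosHomogeneous L f) (hd : HasFDerivAt f f' x) : f' x = L * f x := by
  have hray : HasDerivAt (fun c : ℝ => f (c • x)) (f' x) 1 :=
    hd.comp_hasDerivAt_of_eq 1 (by simpa using (hasDerivAt_id (1 : ℝ)).smul_const x)
      (one_smul ℝ x).symm
  have hpow : HasDerivAt (fun c : ℝ => c ^ L * f x) (L * f x) 1 := by
    simpa using (hasDerivAt_rpow_const (p := L) (Or.inl one_ne_zero)).mul_const (f x)
  refine hray.unique (hpow.congr_of_eventuallyEq ?_)
  filter_upwards [Ioi_mem_nhds one_pos] with c hc using hf c hc x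

theorem ne_zero_of_sum_lt {ι : Type*} [Fintype ι] [Nonempty ι] {ℓ : ℝ → ℝ} {L : ℝ}
    {p : ι → E → ℝ} {x : E} (hℓ : 0 ≤ ℓ 0) (hL : 0 < L) (hhom : ∀ i, IsPosHomogeneous L (p i))
    (hlt : ∑ i, ℓ (p i x) < ℓ 0) : x ≠ 0 := by
  rintro rfl
  simp only [fun i => (hhom i).map_zero hL, Finset.sum_const, Finset.card_univ, nsmul_eq_mul]
    at hlt
  have : (1 : ℝ) ≤ Fintype.card ι := by exact_mod_cast Fintype.card_pos
  nlinarith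

end Homogeneous

section Gradient

variable {E : Type*} [NormedAddCommGroup E] [InnerProductSpace ℝ E] [CompleteSpace E]

theorem HasGradientAt.comp_hasDerivAt {h : E → ℝ} {G v : E} {γ : ℝ → E} {t : ℝ}
    (hh : HasGradientAt h G (γ t)) (hγ : HasDerivAt γ v t) :
    HasDerivAt (fun τ => h (γ τ)) ⟪G, v⟫ t :=
  (hasGradientAt_iff_hasFDerivAt.mp hh).comp_hasDerivAt t hγ

theorem HasDerivAt.comp_hasGradientAt {φ : ℝ → ℝ} {φ' : ℝ} {f : E → ℝ} {g x : E}
    (hφ : HasDerivAt φ φ' (f x)) (hf : HasGradientAt f g x) :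
    HasGradientAt (fun y => φ (f y)) (φ' • g) x := by
  rw [hasGradientAt_iff_hasFDerivAt] at hf ⊢
  refine (hφ.comp_hasFDerivAt x hf).congr_fderiv ?_
  ext v
  simp

theorem HasGradientAt.mul {f g : E → ℝ} {a b x : E} (hf : HasGradientAt f a x)
    (hg : HasGradientAt g b x) : HasGradientAt (fun y => f y * g y) (f x • b + g x • a) x := by
  rw [hasGradientAt_iff_hasFDerivAt] at hf hg ⊢
  refine (hf.mul hg).congr_fderiv ?_
  ext v
  simp

theorem hasGradientAt_norm_rpow {x : E} (hx : x ≠ 0) (p : ℝ) :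
    HasGradientAt (fun y => ‖y‖ ^ p) ((p * ‖x‖ ^ (p - 2)) • x) x := by
  have hsq (y : E) : (‖y‖ ^ 2) ^ (p / 2) = ‖y‖ ^ p := by
    rw [← rpow_natCast, ← rpow_mul (norm_nonneg y)]
    ring_nf
  have h := (hasStrictFDerivAt_norm_sq x).hasFDerivAt.rpow_const (p := p / 2) (by simp [hx])
  simp only [hsq] at h
  rw [hasGradientAt_iff_hasFDerivAt]
  refine h.congr_fderiv ?_
  ext v
  have hexp : (‖x‖ ^ 2) ^ (p / 2 - 1) = ‖x‖ ^ (p - 2) := by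
    rw [← rpow_natCast, ← rpow_mul (norm_nonneg x)]
    ring_nf
  simp [hexp]
  ring

theorem HasGradientAt.div_norm_rpow {f : E → ℝ} {g x : E} (hf : HasGradientAt f g x) (hx : x ≠ 0)
    (L : ℝ) :
    HasGradientAt (fun y => f y / ‖y‖ ^ L) ((‖x‖ ^ L)⁻¹ • (g - (L * f x / ‖x‖ ^ 2) • x)) x := by
  have hxn : 0 < ‖x‖ := norm_pos_iff.mpr hx
  have h := hf.mul (hasGradientAt_norm_rpow hx (-L))
  have hfun : (fun y => f y / ‖y‖ ^ L) = fun y => f y * ‖y‖ ^ (-L) := by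
    funext y
    rw [rpow_neg (norm_nonneg y), div_eq_mul_inv]
  have hgrad : f x • (-L * ‖x‖ ^ (-L - 2)) • x + ‖x‖ ^ (-L) • g
      = (‖x‖ ^ L)⁻¹ • (g - (L * f x / ‖x‖ ^ 2) • x) := by
    rw [rpow_sub hxn, rpow_neg hxn.le, rpow_two]
    module
  rwa [hfun, ← hgrad]

end Gradient

section Decomposition

variable {E : Type*} [NormedAddCommGroup E] [InnerProductSpace ℝ E]

noncomputable def radialPart (x v : E) : E := ⟪v, ‖x‖⁻¹ • x⟫ • (‖x‖⁻¹ • x)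

noncomputable def sphericalPart (x v : E) : E := v - radialPart x v

theorem norm_inv_norm_smul_self {x : E} (hx : x ≠ 0) : ‖‖x‖⁻¹ • x‖ = 1 := by
  simpa using norm_smul_inv_norm (𝕜 := ℝ) hx

theorem norm_radialPart {x : E} (hx : x ≠ 0) (v : E) :
    ‖radialPart x v‖ = |⟪v, ‖x‖⁻¹ • x⟫| := by
  rw [radialPart, norm_smul, norm_inv_norm_smul_self hx, mul_one, Real.norm_eq_abs]

theorem sphericalPart_smul (x v : E) (c : ℝ) :
    sphericalPart x (c • v) = c • sphericalPart x v := by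
  simp only [sphericalPart, radialPart, real_inner_smul_left, smul_sub, smul_smul, mul_assoc]

theorem sphericalPart_sub (x v w : E) :
    sphericalPart x (v - w) = sphericalPart x v - sphericalPart x w := by
  simp only [sphericalPart, radialPart, inner_sub_left, sub_smul]
  abel

theorem sphericalPart_neg (x v : E) : sphericalPart x (-v) = -sphericalPart x v := by
  simpa using sphericalPart_smul x v (-1)

theorem sphericalPart_self (x : E) : sphericalPart x x = 0 := by
  rcases eq_or_ne x 0 with rfl | hx
  · simp [sphericalPart, radialPart]
  · have hxn : ‖x‖ ≠ 0 := norm_ne_zero_iff.mpr hx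
    simp only [sphericalPart, radialPart, real_inner_smul_right, real_inner_self_eq_norm_mul_norm,
      smul_smul]
    field_simp
    simp

theorem inner_eq_radial_add_spherical {x : E} (hx : x ≠ 0) (v w : E) :
    ⟪v, w⟫ = ⟪v, ‖x‖⁻¹ • x⟫ * ⟪w, ‖x‖⁻¹ • x⟫ + ⟪sphericalPart x v, sphericalPart x w⟫ := by
  have hu := norm_inv_norm_smul_self hx
  simp only [sphericalPart, radialPart]
  generalize ‖x‖⁻¹ • x = u at hu ⊢
  simp only [inner_sub_left, inner_sub_right, real_inner_smul_left, real_inner_smul_right,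
    real_inner_self_eq_norm_sq, hu, real_inner_comm u]
  ring

theorem neg_inner_eq_of_sphericalPart_eq_smul {x v w : E} (hx : x ≠ 0) {a : ℝ} (ha : a ≤ 0)
    (hsph : sphericalPart x v = a • sphericalPart x w) (hv : 0 ≤ ⟪v, ‖x‖⁻¹ • x⟫)
    (hw : ⟪w, ‖x‖⁻¹ • x⟫ ≤ 0) :
    -⟪v, w⟫ = ‖radialPart x v‖ * ‖radialPart x w‖ + ‖sphericalPart x v‖ * ‖sphericalPart x w‖ := by
  rw [inner_eq_radial_add_spherical hx, norm_radialPart hx, norm_radialPart hx, hsph, norm_smul,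
    real_inner_smul_left, real_inner_self_eq_norm_mul_norm, abs_of_nonneg hv, abs_of_nonpos hw,
    Real.norm_eq_abs, abs_of_nonpos ha]
  ring

end Decomposition

section Flow

variable {E : Type*} [NormedAddCommGroup E] [InnerProductSpace ℝ E] [CompleteSpace E]

theorem HasDerivAt.norm_inv_smul {γ : ℝ → E} {v : E} {t : ℝ} (hγ : HasDerivAt γ v t)
    (h0 : γ t ≠ 0) :
    HasDerivAt (fun τ => ‖γ τ‖⁻¹ • γ τ) (‖γ t‖⁻¹ • sphericalPart (γ t) v) t := by
  have hn := (hasGradientAt_norm_rpow h0 (-1)).comp_hasDerivAt hγ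
  simp only [rpow_neg_one] at hn
  refine (hn.smul hγ).congr_deriv ?_
  have hpos : 0 < ‖γ t‖ := norm_pos_iff.mpr h0
  rw [show (-1 : ℝ) - 2 = -(3 : ℕ) by norm_num, rpow_neg hpos.le, rpow_natCast]
  simp only [sphericalPart, radialPart, real_inner_smul_right, real_inner_comm v]
  field_simp
  module

def IsGradientFlow (f : E → ℝ) (W : ℝ → E) : Prop :=
  ∀ t, 0 ≤ t → HasDerivAt W (-gradient f (W t)) t

theorem monotoneOn_Ici_of_hasDerivAt_nonneg {g g' : ℝ → ℝ}
    (hg : ∀ t, 0 ≤ t → HasDerivAt g (g' t) t) (hg' : ∀ t, 0 ≤ t → 0 ≤ g' t) :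
    MonotoneOn g (Ici 0) := by
  refine monotoneOn_of_hasDerivWithinAt_nonneg (f' := g') (convex_Ici 0)
    (fun t ht => (hg t ht).continuousAt.continuousWithinAt) (fun t ht => ?_) (fun t ht => ?_)
  all_goals rw [interior_Ici] at ht
  exacts [(hg t ht.le).hasDerivWithinAt, hg' t ht.le]

namespace IsGradientFlow

variable {f : E → ℝ} {W : ℝ → E}

theorem hasDerivAt_comp (hW : IsGradientFlow f W) {h : E → ℝ} {t : ℝ} (ht : 0 ≤ t)
    (hh : DifferentiableAt ℝ h (W t)) :
    HasDerivAt (fun τ => h (W τ)) (-⟪gradient h (W t), gradient f (W t)⟫) t := by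
  simpa using hh.hasGradientAt.comp_hasDerivAt (hW t ht)

theorem antitoneOn (hW : IsGradientFlow f W) (hf : Differentiable ℝ f) :
    AntitoneOn (fun t => f (W t)) (Ici 0) := by
  have := monotoneOn_Ici_of_hasDerivAt_nonneg (fun t ht => (hW.hasDerivAt_comp ht (hf _)).neg)
    (fun t _ => by simp)
  exact fun s hs t ht hst => neg_le_neg_iff.mp (this hs ht hst)

theorem monotoneOn_norm (hW : IsGradientFlow f W) (h : ∀ t, 0 ≤ t → ⟪gradient f (W t), W t⟫ ≤ 0) :
    MonotoneOn (fun t => ‖W t‖) (Ici 0) := by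
  have hsq := monotoneOn_Ici_of_hasDerivAt_nonneg (fun t ht => (hW t ht).norm_sq)
    (fun t ht => by rw [inner_neg_right, real_inner_comm]; linarith [h t ht])
  exact fun s hs t ht hst => (pow_le_pow_iff_left₀ (norm_nonneg _) (norm_nonneg _) two_ne_zero).mp
    (hsq hs ht hst)

end IsGradientFlow

end Flow

section Margin

variable {E : Type*} [NormedAddCommGroup E] [InnerProductSpace ℝ E] [CompleteSpace E]
  {ℓ : ℝ → ℝ} {L : ℝ}

theorem inner_gradient_sum_comp_self {ι : Type*} [Fintype ι] {p : ι → E → ℝ} {x : E}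
    (hℓ : Differentiable ℝ ℓ) (hp : ∀ i, DifferentiableAt ℝ (p i) x)
    (hhom : ∀ i, IsPosHomogeneous L (p i)) :
    ⟪gradient (fun y => ∑ i, ℓ (p i y)) x, x⟫ = L * ∑ i, p i x * deriv ℓ (p i x) := by
  have hd : HasFDerivAt (fun y => ∑ i, ℓ (p i y)) (∑ i, deriv ℓ (p i x) • fderiv ℝ (p i) x) x :=
    HasFDerivAt.fun_sum fun i _ => (hℓ _).hasDerivAt.comp_hasFDerivAt x (hp i).hasFDerivAt
  rw [inner_gradient_left, hd.fderiv, sum_apply, Finset.mul_sum]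
  refine Finset.sum_congr rfl fun i _ => ?_
  rw [smul_apply, (hhom i).hasFDerivAt_apply_self (hp i).hasFDerivAt,
    smul_eq_mul]
  ring

noncomputable def smoothedMargin (ℓ : ℝ → ℝ) (f : E → ℝ) (x : E) : ℝ := invFun ℓ (f x)

noncomputable def normalizedMargin (ℓ : ℝ → ℝ) (f : E → ℝ) (L : ℝ) (x : E) : ℝ :=
  smoothedMargin ℓ f x / ‖x‖ ^ L

theorem IsMarginLoss.inner_gradient_sum_comp_self_le {ι : Type*} [Fintype ι] [Nonempty ι]
    {p : ι → E → ℝ} {x : E} (hℓ : IsMarginLoss ℓ) (hL : 0 ≤ L)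
    (hp : ∀ i, DifferentiableAt ℝ (p i) x) (hhom : ∀ i, IsPosHomogeneous L (p i))
    (hlt : ∑ i, ℓ (p i x) < ℓ 0) :
    ⟪gradient (fun y => ∑ i, ℓ (p i y)) x, x⟫ ≤
      L * (smoothedMargin ℓ (fun y => ∑ i, ℓ (p i y)) x *
        deriv ℓ (smoothedMargin ℓ (fun y => ∑ i, ℓ (p i y)) x)) := by
  have hpos : 0 < ∑ i, ℓ (p i x) := Finset.sum_pos (fun i _ => hℓ.pos _) Finset.univ_nonempty
  rw [inner_gradient_sum_comp_self hℓ.differentiable hp hhom]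
  exact mul_le_mul_of_nonneg_left (hℓ.sum_mul_deriv_le (hℓ.invFun_pos hpos hlt)
    (hℓ.apply_invFun hpos).symm) hL

theorem IsMarginLoss.hasGradientAt_normalizedMargin {f : E → ℝ} {g x : E} (hℓ : IsMarginLoss ℓ)
    (hf : HasGradientAt f g x) (hfx : 0 < f x) (hx : x ≠ 0) (L : ℝ) :
    HasGradientAt (normalizedMargin ℓ f L)
      ((‖x‖ ^ L)⁻¹ • ((deriv ℓ (smoothedMargin ℓ f x))⁻¹ • g -
        (L * smoothedMargin ℓ f x / ‖x‖ ^ 2) • x)) x :=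
  ((hℓ.hasDerivAt_invFun hfx).comp_hasGradientAt hf).div_norm_rpow hx L

theorem IsMarginLoss.neg_inner_gradient_normalizedMargin {f : E → ℝ} {g x : E}
    (hℓ : IsMarginLoss ℓ) (hf : HasGradientAt f g x) (hfx : 0 < f x) (hx : x ≠ 0)
    (hgx : ⟪g, x⟫ ≤ L * (smoothedMargin ℓ f x * deriv ℓ (smoothedMargin ℓ f x)))
    (hgx_nonpos : ⟪g, x⟫ ≤ 0) :
    -⟪gradient (normalizedMargin ℓ f L) x, g⟫ =
      ‖radialPart x (gradient (normalizedMargin ℓ f L) x)‖ * ‖radialPart x g‖ +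
        ‖sphericalPart x (gradient (normalizedMargin ℓ f L) x)‖ * ‖sphericalPart x g‖ := by
  rw [(hℓ.hasGradientAt_normalizedMargin hf hfx hx L).gradient]
  set α := smoothedMargin ℓ f x
  have hD : deriv ℓ α < 0 := hℓ.deriv_neg α
  have hxn : 0 < ‖x‖ := norm_pos_iff.mpr hx
  have hradial : L * α ≤ (deriv ℓ α)⁻¹ * ⟪g, x⟫ := by
    rw [inv_mul_eq_div, le_div_iff_of_neg hD]
    linarith
  refine neg_inner_eq_of_sphericalPart_eq_smul hx (a := (‖x‖ ^ L)⁻¹ * (deriv ℓ α)⁻¹)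
    (mul_nonpos_of_nonneg_of_nonpos (by positivity) (inv_nonpos.mpr hD.le)) ?_ ?_ ?_
  · rw [sphericalPart_smul, sphericalPart_sub, sphericalPart_smul, sphericalPart_smul,
      sphericalPart_self, smul_zero, sub_zero, smul_smul]
  · have : ⟪(‖x‖ ^ L)⁻¹ • ((deriv ℓ α)⁻¹ • g - (L * α / ‖x‖ ^ 2) • x), ‖x‖⁻¹ • x⟫
        = (‖x‖ ^ L)⁻¹ * ‖x‖⁻¹ * ((deriv ℓ α)⁻¹ * ⟪g, x⟫ - L * α) := by
      simp only [real_inner_smul_left, inner_sub_left, real_inner_smul_right,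
        real_inner_self_eq_norm_sq]
      field_simp
    rw [this]
    exact mul_nonneg (by positivity) (sub_nonneg.mpr hradial)
  · rw [real_inner_smul_right]
    exact mul_nonpos_of_nonneg_of_nonpos (by positivity) hgx_nonpos

end Margin

theorem statement_14
    (n k : ℕ) (hn : 0 < n) (L : ℝ) (hL : 0 < L)
    (p : Fin n → EuclideanSpace ℝ (Fin k) → ℝ)
    (hp : ∀ i, ContDiff ℝ 1 (p i))
    (hhom : ∀ i (c : ℝ), 0 < c → ∀ W, p i (c • W) = c ^ L * p i W)
    (ℓ : ℝ → ℝ)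
    (hℓ : ℓ = (fun z => Real.exp (-z)) ∨ ℓ = fun z => Real.log (1 + Real.exp (-z)))
    (𝓛 : EuclideanSpace ℝ (Fin k) → ℝ)
    (h𝓛 : 𝓛 = fun W => ∑ i, ℓ (p i W))
    (α : EuclideanSpace ℝ (Fin k) → ℝ)
    (hα : α = fun W => Function.invFun ℓ (𝓛 W))
    (αt : EuclideanSpace ℝ (Fin k) → ℝ)
    (hαt : αt = fun W => α W / ‖W‖ ^ L)
    (W : ℝ → EuclideanSpace ℝ (Fin k))
    (hW : ∀ t : ℝ, 0 ≤ t → HasDerivAt W (-gradient 𝓛 (W t)) t)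
    (hinit : 𝓛 (W 0) < ℓ 0) :
    0 < ‖W 0‖ ∧
    ∀ t : ℝ, 0 ≤ t →
      ‖W 0‖ ≤ ‖W t‖ ∧
      HasDerivAt (fun τ => ‖W τ‖⁻¹ • W τ)
        (-(‖W t‖⁻¹ •
          (gradient 𝓛 (W t) -
            ⟪gradient 𝓛 (W t), ‖W t‖⁻¹ • W t⟫ • (‖W t‖⁻¹ • W t)))) t ∧
      ‖-(‖W t‖⁻¹ •
          (gradient 𝓛 (W t) -
            ⟪gradient 𝓛 (W t), ‖W t‖⁻¹ • W t⟫ • (‖W t‖⁻¹ • W t)))‖ =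
        ‖gradient 𝓛 (W t) -
            ⟪gradient 𝓛 (W t), ‖W t‖⁻¹ • W t⟫ • (‖W t‖⁻¹ • W t)‖ / ‖W t‖ ∧
      HasDerivAt (fun τ => αt (W τ))
        (‖⟪gradient αt (W t), ‖W t‖⁻¹ • W t⟫ • (‖W t‖⁻¹ • W t)‖ *
            ‖⟪gradient 𝓛 (W t), ‖W t‖⁻¹ • W t⟫ • (‖W t‖⁻¹ • W t)‖ +
          ‖gradient αt (W t) -
              ⟪gradient αt (W t), ‖W t‖⁻¹ • W t⟫ • (‖W t‖⁻¹ • W t)‖ *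
            ‖gradient 𝓛 (W t) -
              ⟪gradient 𝓛 (W t), ‖W t‖⁻¹ • W t⟫ • (‖W t‖⁻¹ • W t)‖) t := by
  have hℓ' : IsMarginLoss ℓ := by
    rcases hℓ with rfl | rfl
    exacts [isMarginLoss_exp, isMarginLoss_logistic]
  have : Nonempty (Fin n) := ⟨⟨0, hn⟩⟩
  have hpd (i) : Differentiable ℝ (p i) := (hp i).differentiable one_ne_zero
  subst h𝓛
  have hnormalized : αt = normalizedMargin ℓ (fun W => ∑ i, ℓ (p i W)) L := by
    subst hαt hα
    rfl
  have hflow : IsGradientFlow _ W := hW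
  have h𝓛_diff : Differentiable ℝ fun W => ∑ i, ℓ (p i W) :=
    Differentiable.fun_sum fun i _ => hℓ'.differentiable.comp (hpd i)
  have h𝓛_lt (t : ℝ) (ht : 0 ≤ t) : ∑ i, ℓ (p i (W t)) < ℓ 0 :=
    (hflow.antitoneOn h𝓛_diff self_mem_Ici ht ht).trans_lt hinit
  have h𝓛_pos (x) : 0 < ∑ i, ℓ (p i x) := Finset.sum_pos (fun i _ => hℓ'.pos _) Finset.univ_nonempty
  have hα_pos (t : ℝ) (ht : 0 ≤ t) := hℓ'.invFun_pos (h𝓛_pos _) (h𝓛_lt t ht)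
  have hinner (t : ℝ) (ht : 0 ≤ t) :=
    hℓ'.inner_gradient_sum_comp_self_le hL.le (fun i => hpd i _) hhom (h𝓛_lt t ht)
  have hW_ne (t : ℝ) (ht : 0 ≤ t) : W t ≠ 0 := ne_zero_of_sum_lt (hℓ'.pos 0).le hL hhom (h𝓛_lt t ht)
  have hinner_nonpos (t : ℝ) (ht : 0 ≤ t) :
      ⟪gradient (fun W => ∑ i, ℓ (p i W)) (W t), W t⟫ ≤ 0 :=
    (hinner t ht).trans <| mul_nonpos_of_nonneg_of_nonpos hL.le <|
      mul_nonpos_of_nonneg_of_nonpos (hα_pos t ht).le (hℓ'.deriv_neg _).le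
  refine ⟨norm_pos_iff.mpr (hW_ne 0 le_rfl), fun t ht => ⟨?_, ?_, ?_, ?_⟩⟩
  · exact hflow.monotoneOn_norm hinner_nonpos self_mem_Ici ht ht
  · have h := (hW t ht).norm_inv_smul (hW_ne t ht)
    rw [sphericalPart_neg, smul_neg] at h
    exact h
  · rw [norm_neg, norm_smul, norm_inv, norm_norm, inv_mul_eq_div]
  · have hgrad := (h𝓛_diff (W t)).hasGradientAt
    rw [hnormalized]
    convert hflow.hasDerivAt_comp ht
      (hℓ'.hasGradientAt_normalizedMargin hgrad (h𝓛_pos _) (hW_ne t ht) L).differentiableAt using 1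
    exact (hℓ'.neg_inner_gradient_normalizedMargin hgrad (h𝓛_pos _) (hW_ne t ht) (hinner t ht)
      (hinner_nonpos t ht)).symm
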